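/- Let (ψ,φ) be a reproducing pair of weakly measurable functions X → H such that φ is Bessel, i.e. there is M < ∞ with ∫_X |⟨f,φ(x)⟩|² dμ(x) ≤ M‖f‖² for all f ∈ H, and assume that the orthogonal complement in L²(X,dμ) of Ran C_ψ ∩ L²(X,dμ) is nonzero, where Ran C_ψ := {⟨f,ψ(·)⟩ : f ∈ H}. Then φ is not μ-independent, i.e. there exists a measurable ξ : X → ℂ, not equal to 0 almost everywhere, with ∫_X ξ(x)⟨φ(x),g⟩ dμ(x) = 0 for all g ∈ H. -/

import Mathlib

open MeasureTheory Filter Topology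
open scoped Classical ENNReal NNReal

noncomputable section

variable {H : Type*} [NormedAddCommGroup H] [InnerProductSpace ℂ H] [CompleteSpace H]
  [TopologicalSpace.SeparableSpace H]
variable {X : Type*} [TopologicalSpace X] [LocallyCompactSpace X] [MeasurableSpace X]
  [BorelSpace X]

/-- Notation for the Mathlib inner product (conjugate-linear in the first slot);
the paper's inner product `⟨f, g⟩` (linear in the first slot) is `⟪g, f⟫`. -/
local notation "⟪" x ", " y "⟫" => @inner ℂ _ _ x y

/-- `φ : X → H` is weakly measurable: `x ↦ ⟨f, φ x⟩` is measurable for every `f ∈ H`. -/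
def WeaklyMeasurable (φ : X → H) : Prop :=
  ∀ f : H, Measurable fun x => ⟪φ x, f⟫

/-- `ξ ∈ 𝒱_φ(X,μ)`: `ξ` is measurable, the integral `∫ ξ(x) ⟨φ(x), g⟩ dμ(x)` exists for all
`g ∈ H`, and it defines a bounded conjugate-linear functional of `g`. -/
def MemV (μ : Measure X) (φ : X → H) (ξ : X → ℂ) : Prop :=
  Measurable ξ ∧ (∀ g : H, Integrable (fun x => ξ x * ⟪g, φ x⟫) μ) ∧
    ∃ c : ℝ, ∀ g : H, ‖∫ x, ξ x * ⟪g, φ x⟫ ∂μ‖ ≤ c * ‖g‖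

/-- The map `T_φ : 𝒱_φ(X,μ) → H`, determined weakly by
`⟨T_φ ξ, g⟩ = ∫ ξ(x) ⟨φ(x), g⟩ dμ(x)` for all `g ∈ H` (junk value `0` off `𝒱_φ`). -/
def Tmap (μ : Measure X) (φ : X → H) (ξ : X → ℂ) : H :=
  if h : MemV μ φ ξ then
    have key : ∀ g : H, Integrable (fun x => (starRingEnd ℂ) (ξ x) * ⟪φ x, g⟫) μ := by
      intro g
      have h2 : Integrable (fun x => (RCLike.conjLIE : ℂ ≃ₗᵢ[ℝ] ℂ) (ξ x * ⟪g, φ x⟫)) μ :=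
        ((RCLike.conjLIE : ℂ ≃ₗᵢ[ℝ] ℂ).integrable_comp_iff).2 (h.2.1 g)
      simpa [RCLike.conjLIE_apply, map_mul] using h2
    (InnerProductSpace.toDual ℂ H).symm
      (LinearMap.mkContinuousOfExistsBound
        { toFun := fun g => ∫ x, (starRingEnd ℂ) (ξ x) * ⟪φ x, g⟫ ∂μ
          map_add' := fun g g' => by
            simp only [inner_add_right, mul_add]
            exact integral_add (key g) (key g')
          map_smul' := fun c g => by
            simp only [inner_smul_right, RingHom.id_apply]
            calc ∫ x, (starRingEnd ℂ) (ξ x) * (c * ⟪φ x, g⟫) ∂μ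
                = ∫ x, c * ((starRingEnd ℂ) (ξ x) * ⟪φ x, g⟫) ∂μ := by
                  simp only [mul_left_comm]
              _ = c * ∫ x, (starRingEnd ℂ) (ξ x) * ⟪φ x, g⟫ ∂μ := integral_const_mul _ _ }
        (by
          obtain ⟨c, hc⟩ := h.2.2
          refine ⟨c, fun g => ?_⟩
          have he : ∫ x, (starRingEnd ℂ) (ξ x) * ⟪φ x, g⟫ ∂μ
              = (starRingEnd ℂ) (∫ x, ξ x * ⟪g, φ x⟫ ∂μ) := by
            rw [← integral_conj]
            congr 1; funext x
            simp [map_mul]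
          simp only [LinearMap.coe_mk, AddHom.coe_mk]
          rw [he, RCLike.norm_conj]
          exact hc g))
  else 0

/-- The norm `‖[ξ]_φ‖_φ = sup_{‖g‖ ≤ 1} |∫ ξ(x) ⟨φ(x), g⟩ dμ(x)|` (computed on a
representative; it only depends on the class `[ξ]_φ = ξ + Ker T_φ`). -/
def Vnorm (μ : Measure X) (φ : X → H) (ξ : X → ℂ) : ℝ :=
  ⨆ g : {g : H // ‖g‖ ≤ 1}, ‖∫ x, ξ x * ⟪(g : H), φ x⟫ ∂μ‖

/-- The range of `T̂_φ : V_φ(X,μ) → H` (equivalently, of `T_φ` on `𝒱_φ(X,μ)`). -/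
def Tran (μ : Measure X) (φ : X → H) : Set H := Tmap μ φ '' {ξ | MemV μ φ ξ}

/-- The analysis coefficient map: `(C_ψ f)(x) = ⟨f, ψ(x)⟩`. -/
def Cpsi (ψ : X → H) (f : H) : X → ℂ := fun x => ⟪ψ x, f⟫

/-- `φ` is `μ`-total: `Ker C_φ = {0}`, i.e. if `∫ ξ(x) ⟨φ(x), f⟩ dμ(x) = 0` for every
`ξ ∈ 𝒱_φ(X,μ)`, then `f = 0`. -/
def MuTotal (μ : Measure X) (φ : X → H) : Prop :=
  ∀ f : H, (∀ ξ, MemV μ φ ξ → ∫ x, ξ x * ⟪f, φ x⟫ ∂μ = 0) → f = 0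

/-- `S : H ≃L[ℂ] H` represents the sesquilinear form `Ω_{ψ,φ}`:
`⟨S f, g⟩ = ∫ ⟨f, ψ(x)⟩ ⟨φ(x), g⟩ dμ(x)` for all `f, g ∈ H`. -/
def IsAnalysisOp (μ : Measure X) (ψ φ : X → H) (S : H ≃L[ℂ] H) : Prop :=
  ∀ f g : H, ⟪g, S f⟫ = ∫ x, ⟪ψ x, f⟫ * ⟪g, φ x⟫ ∂μ

/-- `(ψ, φ)` is a reproducing pair: both weakly measurable, the form
`Ω_{ψ,φ}(f,g) = ∫ ⟨f,ψ(x)⟩⟨φ(x),g⟩ dμ(x)` is well defined (integrable) and bounded, and the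
associated bounded operator `S_{ψ,φ}` has a bounded everywhere-defined inverse. -/
def IsReproducingPair (μ : Measure X) (ψ φ : X → H) : Prop :=
  WeaklyMeasurable ψ ∧ WeaklyMeasurable φ ∧
    (∀ f g : H, Integrable (fun x => ⟪ψ x, f⟫ * ⟪g, φ x⟫) μ) ∧
    ∃ S : H ≃L[ℂ] H, IsAnalysisOp μ ψ φ S

/-- Completeness of `V_φ(X,μ)` in the norm `‖·‖_φ`, phrased via representatives:
every `‖·‖_φ`-Cauchy sequence of elements of `𝒱_φ(X,μ)` converges in `‖·‖_φ`
to an element of `𝒱_φ(X,μ)`. -/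
def VComplete (μ : Measure X) (φ : X → H) : Prop :=
  ∀ ξ : ℕ → X → ℂ, (∀ n, MemV μ φ (ξ n)) →
    (∀ ε : ℝ, 0 < ε → ∃ N, ∀ m ≥ N, ∀ n ≥ N, Vnorm μ φ (ξ m - ξ n) < ε) →
    ∃ η, MemV μ φ η ∧ Tendsto (fun n => Vnorm μ φ (ξ n - η)) atTop (𝓝 0)

/-- `F` is (induced by) a bounded linear functional on `V_φ(X,μ)`: it is linear on `𝒱_φ(X,μ)`,
constant on the classes of `V_φ(X,μ) = 𝒱_φ(X,μ)/Ker T_φ`, and bounded for `‖·‖_φ`. -/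
def IsBddLinearFunctional (μ : Measure X) (φ : X → H) (F : (X → ℂ) → ℂ) : Prop :=
  (∀ ξ η, MemV μ φ ξ → MemV μ φ η → F (ξ + η) = F ξ + F η) ∧
  (∀ (c : ℂ) ξ, MemV μ φ ξ → F (c • ξ) = c * F ξ) ∧
  (∀ ξ η, MemV μ φ ξ → MemV μ φ η → Tmap μ φ (ξ - η) = 0 → F ξ = F η) ∧
  ∃ c : ℝ, ∀ ξ, MemV μ φ ξ → ‖F ξ‖ ≤ c * Vnorm μ φ ξ

/-- The dual norm `‖F‖_{φ*} = sup_{‖[ξ]_φ‖_φ ≤ 1} |F([ξ]_φ)|`. -/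
def DualNorm (μ : Measure X) (φ : X → H) (F : (X → ℂ) → ℂ) : ℝ :=
  ⨆ ξ : {ξ : X → ℂ // MemV μ φ ξ ∧ Vnorm μ φ ξ ≤ 1}, ‖F ξ.1‖

/-- `V_φ(X,μ)` and `V_ψ(X,μ)` are conjugate dual to each other with respect to the pairing
`⟨⟨ξ, η⟩⟩ = ∫ ξ(x) conj(η(x)) dμ(x)`: the pairing is well defined, each class `[η]_ψ` gives a
bounded linear functional on `V_φ(X,μ)`, and `[η]_ψ ↦ ⟨⟨·, η⟩⟩` is a bijection from `V_ψ(X,μ)`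
onto the dual of `V_φ(X,μ)`. -/
def ConjDual (μ : Measure X) (φ ψ : X → H) : Prop :=
  (∀ ξ η, MemV μ φ ξ → MemV μ ψ η →
      Integrable (fun x => ξ x * (starRingEnd ℂ) (η x)) μ) ∧
  (∀ η, MemV μ ψ η →
      IsBddLinearFunctional μ φ (fun ξ => ∫ x, ξ x * (starRingEnd ℂ) (η x) ∂μ)) ∧
  (∀ η η', MemV μ ψ η → MemV μ ψ η' →
      (∀ ξ, MemV μ φ ξ →
        ∫ x, ξ x * (starRingEnd ℂ) (η x) ∂μ = ∫ x, ξ x * (starRingEnd ℂ) (η' x) ∂μ) →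
      Tmap μ ψ (η - η') = 0) ∧
  (∀ F, IsBddLinearFunctional μ φ F →
      ∃ η, MemV μ ψ η ∧ ∀ ξ, MemV μ φ ξ → F ξ = ∫ x, ξ x * (starRingEnd ℂ) (η x) ∂μ)

/-!
Because `φ` is Bessel, Cauchy–Schwarz in `L²` puts every `L²` function into `𝒱_φ`. For the
coefficient functions `C_ψ f` one has `T_φ (C_ψ f) = S f`, so every `η ∈ 𝒱_φ` splits as
`C_ψ (S⁻¹ T_φ η) + ξ` with `T_φ ξ = 0`. Applied to a nonzero `F ⊥ Ran C_ψ ∩ L²`, the kernel part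
`ξ` cannot vanish a.e.: otherwise `F = C_ψ f` would be orthogonal to itself.
-/

section

variable {E : Type*} [NormedAddCommGroup E] [InnerProductSpace ℂ E] {α : Type*}
  [MeasurableSpace α] {μ : Measure α} {ψ φ : α → E}

theorem WeaklyMeasurable.measurable_inner_left (hφ : WeaklyMeasurable φ) (g : E) :
    Measurable fun x => ⟪g, φ x⟫ := by
  simpa only [Function.comp_def, inner_conj_symm] using
    Complex.continuous_conj.measurable.comp (hφ g)

theorem MemV.sub {ξ η : α → ℂ} (hξ : MemV μ φ ξ) (hη : MemV μ φ η) : MemV μ φ (ξ - η) := by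
  obtain ⟨hξm, hξi, c, hc⟩ := hξ
  obtain ⟨hηm, hηi, d, hd⟩ := hη
  have hsub : ∀ g : E, ∫ x, (ξ - η) x * ⟪g, φ x⟫ ∂μ
      = ∫ x, ξ x * ⟪g, φ x⟫ ∂μ - ∫ x, η x * ⟪g, φ x⟫ ∂μ := fun g => by
    simp only [Pi.sub_apply, sub_mul]
    exact integral_sub (hξi g) (hηi g)
  refine ⟨hξm.sub hηm, fun g => ?_, c + d, fun g => ?_⟩
  · simp only [Pi.sub_apply, sub_mul]
    exact (hξi g).sub (hηi g)
  · rw [hsub, add_mul]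
    exact (norm_sub_le _ _).trans (add_le_add (hc g) (hd g))

def IsBesselWith (μ : Measure α) (φ : α → E) (M : ℝ≥0) : Prop :=
  ∀ f : E, ∫⁻ x, ((‖⟪φ x, f⟫‖₊ : ℝ≥0∞) ^ 2) ∂μ ≤ (M : ℝ≥0∞) * (‖f‖₊ : ℝ≥0∞) ^ 2

theorem IsBesselWith.eLpNorm_inner_le {M : ℝ≥0} (hM : IsBesselWith μ φ M) (g : E) :
    eLpNorm (fun x => ⟪g, φ x⟫) 2 μ ≤ NNReal.sqrt M * ‖g‖ₑ := by
  refine (ENNReal.pow_le_pow_left_iff two_ne_zero).1 ?_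
  calc eLpNorm (fun x => ⟪g, φ x⟫) 2 μ ^ 2 = ∫⁻ x, ((‖⟪φ x, g⟫‖₊ : ℝ≥0∞) ^ 2) ∂μ := by
        have hsymm : ∀ x, ‖⟪g, φ x⟫‖ₑ = ‖⟪φ x, g⟫‖₊ := fun x => by
          rw [enorm_eq_nnnorm, ← inner_conj_symm, RCLike.nnnorm_conj]
        simpa only [hsymm, NNReal.coe_ofNat, ENNReal.coe_ofNat, ENNReal.rpow_ofNat] using
          eLpNorm_nnreal_pow_eq_lintegral (f := fun x => ⟪g, φ x⟫) (μ := μ) two_ne_zero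
    _ ≤ M * ‖g‖ₑ ^ 2 := hM g
    _ = (NNReal.sqrt M * ‖g‖ₑ) ^ 2 := by
        rw [mul_pow, ← ENNReal.coe_pow, NNReal.sq_sqrt]

theorem IsBesselWith.memV_of_memLp_two {M : ℝ≥0} (hM : IsBesselWith μ φ M)
    (hφ : WeaklyMeasurable φ) {ξ : α → ℂ} (hξm : Measurable ξ) (hξ : MemLp ξ 2 μ) :
    MemV μ φ ξ := by
  have hcoeff : ∀ g : E, MemLp (fun x => ⟪g, φ x⟫) 2 μ := fun g =>
    ⟨(hφ.measurable_inner_left g).aestronglyMeasurable,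
      (hM.eLpNorm_inner_le g).trans_lt (by finiteness)⟩
  set C := eLpNorm ξ 2 μ * NNReal.sqrt M
  have hholder : ∀ g : E, ‖∫ x, ξ x * ⟪g, φ x⟫ ∂μ‖ₑ ≤ C * ‖g‖ₑ := fun g =>
    calc ‖∫ x, ξ x * ⟪g, φ x⟫ ∂μ‖ₑ ≤ eLpNorm (fun x => ξ x * ⟪g, φ x⟫) 1 μ :=
          (enorm_integral_le_lintegral_enorm _).trans_eq eLpNorm_one_eq_lintegral_enorm.symm
      _ ≤ eLpNorm ξ 2 μ * eLpNorm (fun x => ⟪g, φ x⟫) 2 μ :=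
          (eLpNorm_smul_le_mul_eLpNorm (p := 2) (q := 2) (r := 1) (hcoeff g).1 hξ.1 :)
      _ ≤ C * ‖g‖ₑ := by
          rw [mul_assoc]
          gcongr
          exact hM.eLpNorm_inner_le g
  refine ⟨hξm, fun g => memLp_one_iff_integrable.1 ((hcoeff g).mul' hξ), C.toReal, fun g => ?_⟩
  have hC : C ≠ ⊤ := by finiteness [hξ.2]
  simpa only [toReal_enorm, ENNReal.toReal_mul] using
    ENNReal.toReal_mono (ENNReal.mul_ne_top hC enorm_ne_top) (hholder g)

theorem memV_Cpsi {S : E ≃L[ℂ] E} (hψ : WeaklyMeasurable ψ)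
    (hint : ∀ f g : E, Integrable (fun x => ⟪ψ x, f⟫ * ⟪g, φ x⟫) μ)
    (hS : IsAnalysisOp μ ψ φ S) (f : E) : MemV μ φ (Cpsi ψ f) := by
  refine ⟨hψ f, hint f, ‖S f‖, fun g => ?_⟩
  simp only [Cpsi]
  rw [← hS f g, mul_comm]
  exact norm_inner_le_norm g (S f)

variable [CompleteSpace E]

theorem integral_mul_inner_eq_inner_Tmap {ξ : α → ℂ} (hξ : MemV μ φ ξ) (g : E) :
    ∫ x, ξ x * ⟪g, φ x⟫ ∂μ = ⟪g, Tmap μ φ ξ⟫ := by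
  have hdual : ⟪Tmap μ φ ξ, g⟫ = ∫ x, (starRingEnd ℂ) (ξ x) * ⟪φ x, g⟫ ∂μ := by
    rw [Tmap, dif_pos hξ]
    exact InnerProductSpace.toDual_symm_apply
  rw [← inner_conj_symm, hdual, ← integral_conj]
  simp only [map_mul, Complex.conj_conj, inner_conj_symm]

theorem Tmap_sub {ξ η : α → ℂ} (hξ : MemV μ φ ξ) (hη : MemV μ φ η) :
    Tmap μ φ (ξ - η) = Tmap μ φ ξ - Tmap μ φ η := by
  refine ext_inner_left ℂ fun g => ?_
  rw [inner_sub_right, ← integral_mul_inner_eq_inner_Tmap (hξ.sub hη),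
    ← integral_mul_inner_eq_inner_Tmap hξ, ← integral_mul_inner_eq_inner_Tmap hη,
    ← integral_sub (hξ.2.1 g) (hη.2.1 g)]
  simp only [Pi.sub_apply, sub_mul]

theorem Tmap_Cpsi {S : E ≃L[ℂ] E} (hψ : WeaklyMeasurable ψ)
    (hint : ∀ f g : E, Integrable (fun x => ⟪ψ x, f⟫ * ⟪g, φ x⟫) μ)
    (hS : IsAnalysisOp μ ψ φ S) (f : E) : Tmap μ φ (Cpsi ψ f) = S f :=
  ext_inner_left ℂ fun g => by
    rw [← integral_mul_inner_eq_inner_Tmap (memV_Cpsi hψ hint hS f), hS]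
    rfl

theorem Tmap_sub_Cpsi_symm_Tmap {S : E ≃L[ℂ] E} (hψ : WeaklyMeasurable ψ)
    (hint : ∀ f g : E, Integrable (fun x => ⟪ψ x, f⟫ * ⟪g, φ x⟫) μ)
    (hS : IsAnalysisOp μ ψ φ S) {η : α → ℂ} (hη : MemV μ φ η) :
    Tmap μ φ (η - Cpsi ψ (S.symm (Tmap μ φ η))) = 0 := by
  rw [Tmap_sub hη (memV_Cpsi hψ hint hS _), Tmap_Cpsi hψ hint hS, S.apply_symm_apply, sub_self]

end

theorem statement18_general (μ : Measure X) (ψ φ : X → H)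
    (h : IsReproducingPair μ ψ φ)
    (hBessel : ∃ M : ℝ≥0, ∀ f : H,
        ∫⁻ x, ((‖⟪φ x, f⟫‖₊ : ℝ≥0∞) ^ 2) ∂μ ≤ (M : ℝ≥0∞) * (‖f‖₊ : ℝ≥0∞) ^ 2)
    (hperp : ∃ F : Lp ℂ 2 μ, F ≠ 0 ∧
        ∀ G : Lp ℂ 2 μ, (∃ f : H, Cpsi ψ f =ᵐ[μ] ⇑G) → ⟪F, G⟫ = 0) :
    ∃ ξ : X → ℂ, MemV μ φ ξ ∧ ¬ ξ =ᵐ[μ] 0 ∧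
      ∀ g : H, ∫ x, ξ x * ⟪g, φ x⟫ ∂μ = 0 := by
  obtain ⟨hψ, hφ, hint, S, hS⟩ := h
  obtain ⟨M, hM⟩ : ∃ M, IsBesselWith μ φ M := hBessel
  obtain ⟨F, hF0, hFperp⟩ := hperp
  obtain ⟨η, hηm, hFη⟩ : ∃ η : X → ℂ, Measurable η ∧ ⇑F =ᵐ[μ] η :=
    ⟨_, (Lp.aestronglyMeasurable F).aemeasurable.measurable_mk,
      (Lp.aestronglyMeasurable F).aemeasurable.ae_eq_mk⟩
  have hη : MemV μ φ η := hM.memV_of_memLp_two hφ hηm ((Lp.memLp F).ae_eq hFη)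
  set f := S.symm (Tmap μ φ η)
  have hξ : MemV μ φ (η - Cpsi ψ f) := hη.sub (memV_Cpsi hψ hint hS f)
  refine ⟨η - Cpsi ψ f, hξ, fun hξ0 => hF0 ?_, fun g => ?_⟩
  · have hFψ : Cpsi ψ f =ᵐ[μ] ⇑F := (hFη.trans ((sub_ae_eq_zero _ _).mp hξ0)).symm
    exact inner_self_eq_zero.mp (hFperp F ⟨f, hFψ⟩)
  · rw [integral_mul_inner_eq_inner_Tmap hξ, Tmap_sub_Cpsi_symm_Tmap hψ hint hS hη,
      inner_zero_right]

/-- Let `(ψ,φ)` be a reproducing pair with `φ` Bessel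
(`∫ |⟨f,φ(x)⟩|² dμ(x) ≤ M‖f‖²`), and assume the orthogonal complement in `L²(X,dμ)` of
`Ran C_ψ ∩ L²(X,dμ)` is nonzero. Then `φ` is not `μ`-independent: there is a measurable
`ξ : X → ℂ` (in `𝒱_φ(X,μ)`), not a.e. `0`, with `∫ ξ(x) ⟨φ(x),g⟩ dμ(x) = 0` for all `g`. -/
theorem statement18 (μ : Measure X) [μ.Regular] (ψ φ : X → H)
    (h : IsReproducingPair μ ψ φ)
    (hBessel : ∃ M : ℝ≥0, ∀ f : H,
        ∫⁻ x, ((‖⟪φ x, f⟫‖₊ : ℝ≥0∞) ^ 2) ∂μ ≤ (M : ℝ≥0∞) * (‖f‖₊ : ℝ≥0∞) ^ 2)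
    (hperp : ∃ F : Lp ℂ 2 μ, F ≠ 0 ∧
        ∀ G : Lp ℂ 2 μ, (∃ f : H, Cpsi ψ f =ᵐ[μ] ⇑G) → ⟪F, G⟫ = 0) :
    ∃ ξ : X → ℂ, MemV μ φ ξ ∧ ¬ ξ =ᵐ[μ] 0 ∧
      ∀ g : H, ∫ x, ξ x * ⟪g, φ x⟫ ∂μ = 0 :=
  statement18_general μ ψ φ h hBessel hperp
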